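/- arXiv:1910.12866 — 2 statements merged into one kernel-verified Lean document; each statement's English description precedes it below -/
import Mathlib

section
/- For the 4×4 matrix G with rows [1−γ, n(γ−1), 1/C₁₁, 0], [−n, 1, 0, 1/C₆₆], [C, −nC, γ−1, n], [−nC, n²C, n(1−γ), −1], where γ = 1 + C₁₂/C₁₁ and C = C₂₂ − C₁₂²/C₁₁, in the isotropic case (C₁₁ = 2C₆₆/(2−γ), C = 2C₆₆γ), the eigenvalues of G are n−1, n+1, 1−n, −1−n. -/
open Polynomial Matrix

/-!
For all parameters the characteristic polynomial of `G` is the biquadratic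
`X⁴ - (1 + ((1-γ)² + C/C₁₁) + n²(2 - 2γ + C/C₆₆)) X² + ((1-γ)² + C/C₁₁)(n² - 1)²`.
The isotropic relations are exactly `(1-γ)² + C/C₁₁ = 1` and `2 - 2γ + C/C₆₆ = 2`, which turn it
into `(X² - (n-1)²)(X² - (n+1)²)`.
-/

section SystemMatrix

variable {R : Type*} [CommRing R]

def systemMatrix (γ n a b c : R) : Matrix (Fin 4) (Fin 4) R :=
  !![1 - γ, n * (γ - 1), a, 0;
     -n, 1, 0, b;
     c, -n * c, γ - 1, n;
     -n * c, n ^ 2 * c, n * (1 - γ), -1]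

theorem charpoly_systemMatrix (γ n a b c : R) :
    (systemMatrix γ n a b c).charpoly =
      X ^ 4 - C (1 + ((1 - γ) ^ 2 + a * c) + n ^ 2 * (2 - 2 * γ + b * c)) * X ^ 2
        + C (((1 - γ) ^ 2 + a * c) * (n ^ 2 - 1) ^ 2) := by
  rw [charpoly, det_succ_row_zero]
  simp [Fin.sum_univ_succ, det_fin_three, systemMatrix, charmatrix_apply, Fin.succAbove, C_ofNat]
  ring

end SystemMatrix

theorem X_pow_four_sub_eq_prod_X_sub_C {R : Type*} [CommRing R] (n : R) :
    X ^ 4 - C (2 + 2 * n ^ 2) * X ^ 2 + C ((n ^ 2 - 1) ^ 2) =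
      (X - C (n - 1)) * (X - C (n + 1)) * (X - C (1 - n)) * (X - C (-1 - n)) := by
  simp only [map_add, map_sub, map_neg, map_mul, map_pow, map_one, C_ofNat]
  ring

theorem isotropic_eigenvalues_general (n : ℤ) (C₆₆ γ : ℝ) (hC : 0 < C₆₆)
    (C₁₁ C : ℝ)
    (h11 : C₁₁ = 2 * C₆₆ / (2 - γ))
    (hC' : C = 2 * C₆₆ * γ)
    (G : Matrix (Fin 4) (Fin 4) ℝ)
    (hG : G = !![1 - γ, (n : ℝ) * (γ - 1), C₁₁⁻¹, 0;
                 -(n : ℝ), 1, 0, C₆₆⁻¹;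
                 C, -(n : ℝ) * C, γ - 1, (n : ℝ);
                 -(n : ℝ) * C, (n : ℝ)^2 * C, (n : ℝ) * (1 - γ), -1]) :
    G.charpoly =
      (X - Polynomial.C ((n : ℝ) - 1)) * (X - Polynomial.C ((n : ℝ) + 1)) *
      (X - Polynomial.C (1 - (n : ℝ))) * (X - Polynomial.C (-1 - (n : ℝ))) := by
  have h₁ : (1 - γ) ^ 2 + C₁₁⁻¹ * C = 1 := by
    rw [h11, hC', inv_div]
    field_simp
    ring
  have h₂ : 2 - 2 * γ + C₆₆⁻¹ * C = 2 := by
    rw [hC']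
    field_simp
    ring
  have hG' : G = systemMatrix γ (n : ℝ) C₁₁⁻¹ C₆₆⁻¹ C := hG
  rw [hG', charpoly_systemMatrix, h₁, h₂, one_mul, ← X_pow_four_sub_eq_prod_X_sub_C]
  ring_nf

/-- In the isotropic case the eigenvalues of the 4×4 system matrix `G`
are `n-1`, `n+1`, `1-n`, `-1-n`. -/
theorem isotropic_eigenvalues (n : ℤ) (C₆₆ γ : ℝ) (hC : 0 < C₆₆)
    (hγ : γ ∈ Set.Ioo (0:ℝ) 2)
    (C₁₁ C₁₂ C₂₂ C : ℝ)
    (h11 : C₁₁ = 2 * C₆₆ / (2 - γ))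
    (h12 : C₁₂ = C₁₁ * (γ - 1))
    (h22 : C₂₂ = C₁₁)
    (hC' : C = 2 * C₆₆ * γ)
    (G : Matrix (Fin 4) (Fin 4) ℝ)
    (hG : G = !![1 - γ, (n : ℝ) * (γ - 1), C₁₁⁻¹, 0;
                 -(n : ℝ), 1, 0, C₆₆⁻¹;
                 C, -(n : ℝ) * C, γ - 1, (n : ℝ);
                 -(n : ℝ) * C, (n : ℝ)^2 * C, (n : ℝ) * (1 - γ), -1]) :
    G.charpoly =
      (X - Polynomial.C ((n : ℝ) - 1)) * (X - Polynomial.C ((n : ℝ) + 1)) *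
      (X - Polynomial.C (1 - (n : ℝ))) * (X - Polynomial.C (-1 - (n : ℝ))) :=
  isotropic_eigenvalues_general n C₆₆ γ hC C₁₁ C h11 hC' G hG
end

section
/- The isotropic central impedance Z = (2C₆₆/(4−γ))·[[2+γ, 2−2γ], [2−2γ, 2+γ]] satisfies the algebraic Riccati equation Z G₂ Z + Z G₁ + G₁ᵀ Z − G₃ = 0, where G₁ = [[1−γ, 2(γ−1)], [−2, 1]], G₂ = diag(1/C₁₁, 1/C₆₆) with C₁₁ = 2C₆₆/(2−γ), and G₃ = 2C₆₆γ·[[1, −2], [−2, 4]]. -/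
open Matrix

lemma diag2 (a b : ℝ) : Matrix.diagonal ![a, b] = !![a, 0; 0, b] := by
  ext i j
  fin_cases i <;> fin_cases j <;> simp [Matrix.diagonal]

set_option maxHeartbeats 2000000 in
/-- The isotropic central impedance solves the algebraic Riccati equation. -/
theorem central_impedance_riccati (γ C₆₆ C₁₁ : ℝ)
    (hγ : γ ∈ Set.Ioo (0:ℝ) 2) (hγ4 : γ ≠ 4) (hC : 0 < C₆₆)
    (h11 : C₁₁ = 2 * C₆₆ / (2 - γ))
    (Z G₁ G₂ G₃ : Matrix (Fin 2) (Fin 2) ℝ)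
    (hZ : Z = (2 * C₆₆ / (4 - γ)) • !![2 + γ, 2 - 2 * γ; 2 - 2 * γ, 2 + γ])
    (hG₁ : G₁ = !![1 - γ, 2 * (γ - 1); -2, 1])
    (hG₂ : G₂ = Matrix.diagonal ![C₁₁⁻¹, C₆₆⁻¹])
    (hG₃ : G₃ = (2 * C₆₆ * γ) • !![1, -2; -2, 4]) :
    Z * G₂ * Z + Z * G₁ + G₁ᵀ * Z - G₃ = 0 := by
  obtain ⟨h0, h2⟩ := hγ
  have h2' : (2:ℝ) - γ ≠ 0 := by linarith
  have h4 : (4:ℝ) - γ ≠ 0 := by linarith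
  have hC' : C₆₆ ≠ 0 := ne_of_gt hC
  have h11' : C₁₁ ≠ 0 := by
    rw [h11]; positivity
  subst hZ hG₁ hG₂ hG₃
  ext i j
  fin_cases i <;> fin_cases j <;>
    simp [diag2, Matrix.mul_apply, Fin.sum_univ_succ, Matrix.transpose, h11] <;>
    field_simp <;> ring
end
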